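/- arXiv:2109.13458 — 4 statements merged into one kernel-verified Lean document; each statement's English description precedes it below -/
import Mathlib

section
/- Let a ∈ {1,2} and let n, k be positive integers with 2 ≤ k ≤ 2a·3^{n-1}+1 and k < a·3^n. Then v_3(s(a·3^n, a·3^n − k)) = n − 1 − v_3(k) if k is even, and v_3(s(a·3^n, a·3^n − k)) = 2n − 1 + v_3(k) − v_3(k−1) if k is odd. -/
/-- The unsigned Stirling number of the first kind: the number of permutations of
`n` elements with exactly `k` disjoint cycles.  It is characterized by
`x(x+1)⋯(x+n-1) = ∑ k, stirling1 n k * x^k`. -/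
noncomputable def stirling1 (n k : ℕ) : ℕ := (ascPochhammer ℕ n).coeff k

namespace Stirling3

open Polynomial Finset

lemma ascPochhammer_int_eq_prod (m : ℕ) :
    ascPochhammer ℤ m = ∏ i ∈ Finset.range m, (X + C (i : ℤ)) := by
  induction m with
  | zero => simp
  | succ n ih =>
      rw [ascPochhammer_succ_right, ih, Finset.prod_range_succ]
      norm_cast

lemma dvd_prod_sub_prod {ι : Type*} (d : ℤ[X]) (s : Finset ι) (f g : ι → ℤ[X])
    (h : ∀ i ∈ s, d ∣ f i - g i) : d ∣ ∏ i ∈ s, f i - ∏ i ∈ s, g i := by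
  classical
  induction s using Finset.induction_on with
  | empty => simp
  | insert _ _ hx ih =>
      rename_i x s'
      rw [Finset.prod_insert hx, Finset.prod_insert hx]
      have h1 : d ∣ f x - g x := h x (mem_insert_self x s')
      have h2 : d ∣ ∏ i ∈ s', f i - ∏ i ∈ s', g i :=
        ih fun i hi => h i (mem_insert_of_mem hi)
      have : f x * ∏ i ∈ s', f i - g x * ∏ i ∈ s', g i
          = (f x - g x) * ∏ i ∈ s', f i + g x * (∏ i ∈ s', f i - ∏ i ∈ s', g i) := by ring
      rw [this]
      exact dvd_add (Dvd.dvd.mul_right h1 _) (Dvd.dvd.mul_left h2 _)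

lemma cube_lift (r : ℕ) (A B : ℤ[X]) (hr : 1 ≤ r) (h : (3 ^ r : ℤ[X]) ∣ A - B) :
    (3 ^ (r + 1) : ℤ[X]) ∣ A ^ 3 - B ^ 3 := by
  have key : A ^ 3 - B ^ 3 = (A - B) ^ 3 + 3 * A * B * (A - B) := by ring
  rw [key]
  apply dvd_add
  · have h1 : (3 ^ (r + 1) : ℤ[X]) ∣ (3 ^ r : ℤ[X]) ^ 3 := by
      rw [← pow_mul]
      exact pow_dvd_pow 3 (by omega)
    exact h1.trans (pow_dvd_pow_of_dvd h 3)
  · obtain ⟨c, hc⟩ := h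
    rw [hc]
    have : 3 * A * B * (3 ^ r * c) = 3 ^ (r + 1) * (A * B * c) := by ring
    rw [this]
    exact Dvd.intro _ rfl

lemma mul_sub_mul_dvd (d A₁ A₂ B₁ B₂ : ℤ[X]) (h1 : d ∣ A₁ - A₂) (h2 : d ∣ B₁ - B₂) :
    d ∣ A₁ * B₁ - A₂ * B₂ := by
  have : A₁ * B₁ - A₂ * B₂ = (A₁ - A₂) * B₁ + A₂ * (B₁ - B₂) := by ring
  rw [this]
  exact dvd_add (h1.mul_right _) (h2.mul_left _)

lemma prod_block (E c : ℕ) : ∏ i ∈ Finset.Ico c (c + E), (X + C (i : ℤ))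
    = ∏ i ∈ Finset.range E, (X + C ((c + i : ℕ) : ℤ)) := by
  rw [Finset.prod_Ico_eq_prod_range]
  simp

lemma phi_cong (r : ℕ) :
    (3 ^ (r + 1) : ℤ[X]) ∣ (∏ i ∈ Finset.range (3 ^ (r + 1)), (X + C (i : ℤ)))
      - (X ^ 3 - X) ^ (3 ^ r) := by
  induction r with
  | zero =>
      refine ⟨X ^ 2 + X, ?_⟩
      rw [show (3:ℕ)^1 = 3 by norm_num]
      rw [Finset.prod_range_succ, Finset.prod_range_succ, Finset.prod_range_succ,
        Finset.prod_range_zero]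
      push_cast
      simp only [Polynomial.C_0, Polynomial.C_1, map_ofNat]
      ring
  | succ r ih =>
      set E := 3 ^ (r + 1) with hE
      have hsplit : (∏ i ∈ Finset.range (3 ^ (r + 2)), (X + C (i : ℤ)))
          = ∏ i ∈ Finset.range E,
              ((X + C (i:ℤ)) * (X + C ((E + i : ℕ) : ℤ)) * (X + C ((E + (E + i) : ℕ) : ℤ))) := by
        have h3 : 3 ^ (r + 2) = E + (E + E) := by rw [hE]; ring
        rw [h3, Finset.prod_range_add, Finset.prod_range_add]
        symm
        rw [Finset.prod_mul_distrib, Finset.prod_mul_distrib, mul_assoc]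
      rw [hsplit]
      have step1 : (3 ^ (r + 2) : ℤ[X]) ∣
          (∏ i ∈ Finset.range E,
              ((X + C (i:ℤ)) * (X + C ((E + i : ℕ) : ℤ)) * (X + C ((E + (E + i) : ℕ) : ℤ))))
          - ∏ i ∈ Finset.range E, (X + C (i:ℤ)) ^ 3 := by
        apply dvd_prod_sub_prod
        intro i _
        refine ⟨(X + C (i:ℤ)) ^ 2 + 2 * 3 ^ r * (X + C (i:ℤ)), ?_⟩
        have hc1 : ((E + i : ℕ) : ℤ) = (i : ℤ) + 3 ^ (r+1) := by push_cast [hE]; ring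
        have hc2 : ((E + (E + i) : ℕ) : ℤ) = (i : ℤ) + 2 * 3 ^ (r+1) := by push_cast [hE]; ring
        rw [hc1, hc2]
        simp only [map_add, map_pow, map_mul, map_ofNat]
        ring
      have step2 : (3 ^ (r + 2) : ℤ[X]) ∣
          (∏ i ∈ Finset.range E, (X + C (i:ℤ)) ^ 3) - (X ^ 3 - X) ^ (3 ^ (r+1)) := by
        rw [Finset.prod_pow]
        have hexp : (X ^ 3 - X : ℤ[X]) ^ (3 ^ (r+1)) = ((X ^ 3 - X) ^ (3 ^ r)) ^ 3 := by
          rw [show (3:ℕ)^(r+1) = 3^r * 3 from by rw [pow_succ], pow_mul]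
        rw [hexp]
        exact cube_lift (r+1) _ _ (by omega) ih
      have := dvd_add step1 step2
      simpa using this

lemma P_cong (a r : ℕ) :
    (3 ^ (r + 1) : ℤ[X]) ∣ (∏ i ∈ Finset.range (a * 3 ^ (r + 1)), (X + C (i : ℤ)))
      - (X ^ 3 - X) ^ (a * 3 ^ r) := by
  induction a with
  | zero => simp
  | succ a ih =>
      have hsplit : (∏ i ∈ Finset.range ((a+1) * 3 ^ (r + 1)), (X + C (i : ℤ)))
          = (∏ i ∈ Finset.range (a * 3 ^ (r + 1)), (X + C (i : ℤ))) *
            ∏ i ∈ Finset.range (3 ^ (r+1)), (X + C ((a * 3 ^ (r+1) + i : ℕ) : ℤ)) := by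
        rw [show (a+1) * 3 ^ (r+1) = a * 3 ^ (r+1) + 3 ^ (r+1) by ring,
          Finset.prod_range_add]
      have hpow : (X ^ 3 - X : ℤ[X]) ^ ((a+1) * 3 ^ r)
          = (X ^ 3 - X) ^ (a * 3 ^ r) * (X ^ 3 - X) ^ (3 ^ r) := by
        rw [← pow_add]
        congr 1
        ring
      rw [hsplit, hpow]
      apply mul_sub_mul_dvd _ _ _ _ _ ih
      have hblock : (3 ^ (r + 1) : ℤ[X]) ∣
          (∏ i ∈ Finset.range (3 ^ (r+1)), (X + C ((a * 3 ^ (r+1) + i : ℕ) : ℤ)))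
          - ∏ i ∈ Finset.range (3 ^ (r+1)), (X + C (i : ℤ)) := by
        apply dvd_prod_sub_prod
        intro i _
        refine ⟨C (a : ℤ), ?_⟩
        have : ((a * 3 ^ (r+1) + i : ℕ) : ℤ) = (i : ℤ) + a * 3 ^ (r+1) := by push_cast; ring
        rw [this]
        simp only [map_add, map_mul, map_pow, map_ofNat]
        ring
      have := dvd_add hblock (phi_cong r)
      simpa using this

lemma stirling_coeff (m k : ℕ) : ((stirling1 m k : ℤ)) = (ascPochhammer ℤ m).coeff k := by
  rw [stirling1, ← ascPochhammer_map (Nat.castRingHom ℤ), coeff_map]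
  rfl

lemma XcubeX_pow (M : ℕ) : ((X ^ 3 - X : ℤ[X])) ^ M
    = ∑ j ∈ Finset.range (M + 1),
        C ((-1 : ℤ) ^ (M - j) * ((M.choose j : ℕ) : ℤ)) * X ^ (2 * j + M) := by
  rw [sub_eq_add_neg, add_pow]
  apply Finset.sum_congr rfl
  intro j hj
  have hjM : j ≤ M := by simpa using Nat.lt_succ_iff.mp (Finset.mem_range.mp hj)
  have hexp : 3 * j + (M - j) = 2 * j + M := by omega
  calc (X ^ 3 : ℤ[X]) ^ j * (-X) ^ (M - j) * ((M.choose j : ℕ) : ℤ[X])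
      = ((-1 : ℤ[X]) ^ (M - j) * ((M.choose j : ℕ) : ℤ[X])) * (X ^ (3 * j) * X ^ (M - j)) := by
        rw [← pow_mul, neg_pow]
        ring
    _ = C ((-1 : ℤ) ^ (M - j) * ((M.choose j : ℕ) : ℤ)) * X ^ (2 * j + M) := by
        rw [← pow_add, hexp]
        simp [map_mul, map_pow]

lemma coeff1 (M j : ℕ) (hj : j ≤ M) :
    ((X ^ 3 - X : ℤ[X]) ^ M).coeff (M + 2 * j)
      = (-1 : ℤ) ^ (M - j) * ((M.choose j : ℕ) : ℤ) := by
  rw [XcubeX_pow, finset_sum_coeff]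
  have : ∀ i ∈ Finset.range (M + 1),
      (C ((-1 : ℤ) ^ (M - i) * ((M.choose i : ℕ) : ℤ)) * X ^ (2 * i + M)).coeff (M + 2 * j)
      = if i = j then (-1 : ℤ) ^ (M - i) * ((M.choose i : ℕ) : ℤ) else 0 := by
    intro i _
    rw [coeff_C_mul, coeff_X_pow]
    by_cases h : i = j
    · simp [h, show M + 2 * j = 2 * j + M by omega]
    · simp [h, show ¬ (M + 2 * j = 2 * i + M) by omega]
  rw [Finset.sum_congr rfl this, Finset.sum_ite_eq' (Finset.range (M+1)) j]
  simp [Nat.lt_succ_iff, hj]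

lemma coeff2 (M t : ℕ) (ht : ¬ 2 ∣ (t + M)) :
    ((X ^ 3 - X : ℤ[X]) ^ M).coeff t = 0 := by
  rw [XcubeX_pow, finset_sum_coeff]
  apply Finset.sum_eq_zero
  intro i _
  rw [coeff_C_mul, coeff_X_pow]
  have : ¬ (t = 2 * i + M) := by
    intro h
    exact ht (by omega)
  simp [this]

lemma coeff_P_sub (a r k : ℕ) (hk : k ≤ a * 3 ^ (r+1)) :
    (3 ^ (r + 1) : ℤ) ∣ (stirling1 (a * 3 ^ (r+1)) (a * 3 ^ (r+1) - k) : ℤ)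
      - ((X ^ 3 - X : ℤ[X]) ^ (a * 3 ^ r)).coeff (a * 3 ^ (r+1) - k) := by
  obtain ⟨q, hq⟩ := P_cong a r
  rw [stirling_coeff, ascPochhammer_int_eq_prod]
  have h1 : (∏ i ∈ Finset.range (a * 3 ^ (r + 1)), (X + C (i : ℤ)))
      - (X ^ 3 - X) ^ (a * 3 ^ r) = C ((3:ℤ) ^ (r+1)) * q := by
    rw [hq]
    norm_num
  have h2 := congrArg (fun p => Polynomial.coeff p (a * 3 ^ (r+1) - k)) h1
  simp only [coeff_sub, coeff_C_mul] at h2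
  exact ⟨q.coeff (a * 3 ^ (r+1) - k), h2⟩

lemma even_cong (a r j : ℕ) (hj1 : 1 ≤ j) (hj2 : j ≤ a * 3 ^ r) :
    (3 ^ (r + 1) : ℤ) ∣ (stirling1 (a * 3 ^ (r+1)) (a * 3 ^ (r+1) - 2 * j) : ℤ)
      - (-1 : ℤ) ^ j * ((a * 3 ^ r).choose j : ℤ) := by
  set M := a * 3 ^ r with hM
  have hm : a * 3 ^ (r+1) = 3 * M := by rw [hM]; ring
  have hcoe : a * 3 ^ (r+1) - 2 * j = M + 2 * (M - j) := by omega
  have h := coeff_P_sub a r (2 * j) (by omega)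
  rw [hcoe, coeff1 M (M - j) (by omega), show M - (M - j) = j by omega,
    Nat.choose_symm hj2] at h
  rw [hcoe]
  exact h

lemma odd_dvd (a r j : ℕ) (hj : ¬ 2 ∣ j) (hjm : j ≤ a * 3 ^ (r+1)) :
    (3 ^ (r + 1) : ℤ) ∣ (stirling1 (a * 3 ^ (r+1)) (a * 3 ^ (r+1) - j) : ℤ) := by
  have h := coeff_P_sub a r j hjm
  have hm : a * 3 ^ (r+1) = 3 * (a * 3 ^ r) := by ring
  rw [coeff2 (a * 3 ^ r) _ (by omega)] at h
  simpa using h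

lemma not_dvd_choose (a r i : ℕ) (ha : a = 1 ∨ a = 2) (hi : i ≤ a * 3 ^ r - 1) :
    ¬ (3 ∣ (a * 3 ^ r - 1).choose i) := by
  haveI : Fact (Nat.Prime 3) := ⟨by norm_num⟩
  set n' := a * 3 ^ r - 1 with hn'
  have h3r : 1 ≤ 3 ^ r := Nat.one_le_pow r 3 (by norm_num)
  have hpos : 1 ≤ a * 3 ^ r := by
    rcases ha with h | h <;> subst h <;> omega
  by_cases h0 : n' = 0
  · have : i = 0 := by omega
    subst this
    rw [h0]
    simp
  have hlt : n' < 3 ^ (r + 1) := by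
    have h1 : a * 3 ^ r ≤ 2 * 3 ^ r := by
      rcases ha with h | h <;> subst h <;> omega
    have h2 : 3 ^ (r + 1) = 3 * 3 ^ r := by rw [pow_succ]; ring
    omega
  have hlog : Nat.log 3 n' < r + 1 := Nat.log_lt_of_lt_pow h0 hlt
  have hval := padicValNat_choose (p := 3) hi hlog
  have hcard : ((Finset.Ico 1 (r+1)).filter
      fun s => 3 ^ s ≤ i % 3 ^ s + (n' - i) % 3 ^ s).card = 0 := by
    rw [Finset.card_eq_zero, Finset.filter_eq_empty_iff]
    intro s hs
    simp only [Finset.mem_Ico] at hs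
    set q := 3 ^ s with hq
    have hq1 : 2 ≤ q := by
      calc 2 ≤ 3 ^ 1 := by norm_num
      _ ≤ q := Nat.pow_le_pow_right (by norm_num) hs.1
    have hdvd : q ∣ a * 3 ^ r := Dvd.dvd.mul_left (pow_dvd_pow 3 (by omega)) a
    obtain ⟨t, ht⟩ := hdvd
    have ht1 : 1 ≤ t := by
      rcases Nat.eq_zero_or_pos t with h | h
      · rw [h, mul_zero] at ht; omega
      · exact h
    obtain ⟨t', rfl⟩ : ∃ t', t = t' + 1 := ⟨t - 1, by omega⟩
    have hkey : a * 3 ^ r = q * t' + q := by rw [ht]; ring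
    have key : n' = (q - 1) + q * t' := by omega
    have hmod : n' % q = q - 1 := by
      rw [key, Nat.add_mul_mod_self_left, Nat.mod_eq_of_lt (by omega)]
    intro hcontra
    have hA : i % q < q := Nat.mod_lt _ (by omega)
    have hB : (n' - i) % q < q := Nat.mod_lt _ (by omega)
    have hsum : (i % q + (n' - i) % q) % q = q - 1 := by
      rw [← Nat.add_mod, Nat.add_sub_cancel' hi, hmod]
    have habs : (i % q + (n' - i) % q) % q = i % q + (n' - i) % q - q := by
      rw [Nat.mod_eq_sub_mod hcontra, Nat.mod_eq_of_lt (by omega)]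
    omega
  rw [hcard] at hval
  intro hdvd
  have h1 : (3:ℕ) ^ 1 ∣ (n').choose i := by simpa using hdvd
  have := (padicValNat_dvd_iff_le (Nat.choose_pos hi).ne').mp h1
  omega

lemma choose_val (a r j : ℕ) (ha : a = 1 ∨ a = 2) (hj1 : 1 ≤ j) (hj2 : j ≤ a * 3 ^ r) :
    padicValNat 3 ((a * 3 ^ r).choose j) + padicValNat 3 j = r := by
  haveI : Fact (Nat.Prime 3) := ⟨by norm_num⟩
  set M := a * 3 ^ r with hM
  have h3r : 1 ≤ 3 ^ r := Nat.one_le_pow r 3 (by norm_num)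
  have hMpos : 1 ≤ M := by rcases ha with h | h <;> rw [hM, h] <;> omega
  have hid : M * (M - 1).choose (j - 1) = M.choose j * j := by
    have := Nat.add_one_mul_choose_eq (M - 1) (j - 1)
    rw [show M - 1 + 1 = M by omega, show j - 1 + 1 = j by omega] at this
    exact this
  have hC'pos : 0 < (M - 1).choose (j - 1) := Nat.choose_pos (by omega)
  have hCpos : 0 < M.choose j := Nat.choose_pos hj2
  have hv := congrArg (padicValNat 3) hid
  have e1 : padicValNat 3 (M * (M - 1).choose (j - 1))
      = padicValNat 3 M + padicValNat 3 ((M - 1).choose (j - 1)) :=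
    padicValNat.mul (by omega) (by omega)
  have e2 : padicValNat 3 (M.choose j * j)
      = padicValNat 3 (M.choose j) + padicValNat 3 j :=
    padicValNat.mul (by omega) (by omega)
  have hv1 : padicValNat 3 ((M - 1).choose (j - 1)) = 0 :=
    padicValNat.eq_zero_of_not_dvd (not_dvd_choose a r (j-1) ha (by omega))
  have e3 : padicValNat 3 (a * 3 ^ r) = padicValNat 3 a + padicValNat 3 (3 ^ r) :=
    padicValNat.mul (by rcases ha with h|h <;> omega) (by omega)
  have e4 : padicValNat 3 (3 ^ r) = r := padicValNat.prime_pow (p := 3) r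
  have e5 : padicValNat 3 a = 0 :=
    padicValNat.eq_zero_of_not_dvd (by rcases ha with h|h <;> subst h <;> norm_num)
  have hv2 : padicValNat 3 M = r := by rw [hM, e3, e4, e5]; omega
  omega

lemma val_le (a r j : ℕ) (ha : a = 1 ∨ a = 2) (hj1 : 1 ≤ j) (hj2 : j ≤ a * 3 ^ r) :
    padicValNat 3 j ≤ r := by
  have := choose_val a r j ha hj1 hj2
  omega

noncomputable def Epoly (m : ℕ) : ℤ[X] := ∏ i ∈ Finset.range (m-1), (X + C ((i:ℤ)+1))
noncomputable def Npoly (m : ℕ) : ℤ[X] := ∏ i ∈ Finset.range (m-1), (X - C ((i:ℤ)+1))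

lemma asc_eq_X_mul_E (m : ℕ) (hm : 1 ≤ m) : ascPochhammer ℤ m = X * Epoly m := by
  obtain ⟨m', rfl⟩ : ∃ m', m = m' + 1 := ⟨m - 1, by omega⟩
  rw [ascPochhammer_int_eq_prod, Finset.prod_range_succ', Epoly]
  simp only [Nat.add_sub_cancel, Nat.cast_zero, map_zero, add_zero, Nat.cast_add,
    Nat.cast_one]
  rw [mul_comm]

lemma coeff_aeval_negX (p : ℤ[X]) (j : ℕ) :
    ((Polynomial.aeval (-X : ℤ[X])) p).coeff j = (-1)^j * p.coeff j := by
  induction p using Polynomial.induction_on' with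
  | add p q hp hq => simp [hp, hq, mul_add]
  | monomial n a =>
      rw [aeval_monomial, neg_pow]
      simp only [algebraMap_int_eq, eq_intCast]
      rw [show ((a : ℤ[X])) = C a from by simp]
      rw [show (C a : ℤ[X]) * ((-1)^n * X^n) = C (a * (-1)^n) * X^n from by
        rw [map_mul, map_pow, map_neg, map_one]; ring]
      rw [coeff_C_mul, coeff_X_pow, coeff_monomial]
      by_cases h : j = n
      · subst h; simp [mul_comm]
      · simp [h, Ne.symm h]

lemma aeval_negX_E (m : ℕ) : (Polynomial.aeval (-X : ℤ[X])) (Epoly m)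
    = (-1)^(m-1) * Npoly m := by
  rw [Epoly, map_prod, Npoly]
  have : ∀ i ∈ Finset.range (m-1),
      (Polynomial.aeval (-X : ℤ[X])) (X + C ((i:ℤ)+1)) = (-1) * (X - C ((i:ℤ)+1)) := by
    intro i _
    simp [map_add, aeval_X]
    ring
  rw [Finset.prod_congr rfl this, Finset.prod_mul_distrib, Finset.prod_const,
    Finset.card_range]

lemma N_coeff (m j : ℕ) :
    (Npoly m).coeff j = (-1:ℤ)^(m-1) * (-1)^j * (Epoly m).coeff j := by
  have h := coeff_aeval_negX (Epoly m) j
  rw [aeval_negX_E] at h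
  have h2 : ((-1:ℤ[X])^(m-1) * Npoly m).coeff j = (-1:ℤ)^(m-1) * (Npoly m).coeff j := by
    rw [show ((-1:ℤ[X])^(m-1)) = C ((-1:ℤ)^(m-1)) by simp [map_pow], coeff_C_mul]
  rw [h2] at h
  have := congrArg (fun z => (-1:ℤ)^(m-1) * z) h
  rw [← mul_assoc, ← pow_add, ← two_mul, pow_mul, neg_one_sq, one_pow, one_mul] at this
  rw [this]
  ring

lemma taylor_N (m : ℕ) : Polynomial.taylor ((m:ℤ)) (Npoly m) = Epoly m := by
  rw [show Polynomial.taylor ((m:ℤ)) (Npoly m)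
      = (Polynomial.taylorAlgHom ((m:ℤ))) (Npoly m) from rfl, Npoly, map_prod, Epoly]
  have h1 : ∀ i ∈ Finset.range (m-1),
      (Polynomial.taylorAlgHom ((m:ℤ))) (X - C ((i:ℤ)+1))
      = X + C (((m - 1 - 1 - i : ℕ) : ℤ) + 1) := by
    intro i hi
    have hi' : i ≤ m - 2 := by
      have := Finset.mem_range.mp hi; omega
    have hm : 2 ≤ m := by
      have := Finset.mem_range.mp hi; omega
    rw [map_sub, taylorAlgHom_apply, taylorAlgHom_apply, taylor_X, taylor_C]
    have : ((m - 1 - 1 - i : ℕ) : ℤ) + 1 = (m : ℤ) - ((i:ℤ)+1) := by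
      push_cast [Nat.cast_sub (by omega : i ≤ m - 1 - 1), Nat.cast_sub (by omega : (1:ℕ) ≤ m - 1),
        Nat.cast_sub (by omega : (1:ℕ) ≤ m)]
      ring
    rw [this, map_sub]
    ring
  rw [Finset.prod_congr rfl h1]
  exact Finset.prod_range_reflect (fun j => X + C ((j:ℤ)+1)) (m-1)

lemma reflect_identity (m k : ℕ) (hk : k ≤ m - 1) (hm : 1 ≤ m) :
    (Epoly m).coeff (m-1-k) = ∑ n ∈ Finset.range (k+1),
      (-1:ℤ)^(k-n) * (((m-1-k+n).choose n : ℕ) : ℤ)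
        * (Epoly m).coeff (m-1-(k-n)) * (m:ℤ)^n := by
  set d := m - 1 - k with hd
  have hE : (Epoly m).coeff d = (Polynomial.taylor ((m:ℤ)) (Npoly m)).coeff d := by
    rw [taylor_N]
  rw [hE, Polynomial.taylor_coeff]
  have hdegN : (Npoly m).natDegree ≤ m - 1 := by
    rw [Npoly]
    refine le_trans (Polynomial.natDegree_prod_le _ _) ?_
    have h := Finset.sum_le_sum (s := Finset.range (m-1))
      (f := fun i => (X - C ((i:ℤ)+1)).natDegree) (g := fun _ => 1)
      (fun i _ => Polynomial.natDegree_X_sub_C_le _)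
    simpa using h
  have hdeg : ((Polynomial.hasseDeriv d (Npoly m)).natDegree) < k + 1 := by
    have := Polynomial.natDegree_hasseDeriv_le (Npoly m) d
    omega
  rw [Polynomial.eval_eq_sum_range' hdeg]
  apply Finset.sum_congr rfl
  intro n hn
  have hnk : n ≤ k := by have := Finset.mem_range.mp hn; omega
  rw [Polynomial.hasseDeriv_coeff, N_coeff]
  have h1 : n + d = m - 1 - (k - n) := by omega
  have h2 : (n + d).choose d = (m-1-k+n).choose n := by
    have hsym := Nat.choose_symm (Nat.le_add_left d n)
    rw [Nat.add_sub_cancel] at hsym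
    rw [← hsym, show m-1-k+n = n + d from by omega]
  have hsign : ((-1:ℤ))^(m-1) * (-1)^(n+d) = (-1)^(k-n) := by
    rw [← pow_add, neg_one_pow_eq_pow_mod_two, neg_one_pow_eq_pow_mod_two (k-n)]
    congr 1
    omega
  rw [h1] at *
  rw [h2]
  rw [← hsign]
  ring

lemma sum_peel3 (F : ℕ → ℤ) (k : ℕ) (hk : 3 ≤ k) :
    ∑ n ∈ Finset.range (k+1), F n
      = F 0 + F 1 + F 2 + ∑ i ∈ Finset.range (k-2), F (3+i) := by
  rw [show k + 1 = 3 + (k-2) from by omega, Finset.sum_range_add]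
  simp only [Finset.sum_range_succ, Finset.sum_range_zero]
  ring

lemma odd_identity (m k : ℕ) (hm : 1 ≤ m) (hk3 : 3 ≤ k) (hk : k ≤ m - 1)
    (hkodd : ¬ 2 ∣ k) :
    ∃ w : ℤ,
      2 * (Epoly m).coeff (m-1-k)
        = ((m - k : ℕ) : ℤ) * (Epoly m).coeff (m-1-(k-1)) * m
          - (((m-k+1).choose 2 : ℕ) : ℤ) * (Epoly m).coeff (m-1-(k-2)) * (m:ℤ)^2
          + (m:ℤ)^3 * w := by
  have h := reflect_identity m k hk hm
  set F : ℕ → ℤ := fun n => (-1:ℤ)^(k-n) * (((m-1-k+n).choose n : ℕ) : ℤ)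
        * (Epoly m).coeff (m-1-(k-n)) * (m:ℤ)^n with hF
  rw [sum_peel3 F k hk3] at h
  have hodd : Odd k := Nat.odd_iff.mpr (by omega)
  have hF0 : F 0 = - (Epoly m).coeff (m-1-k) := by
    rw [hF]
    simp only [Nat.sub_zero, Nat.add_zero, Nat.choose_zero_right, pow_zero]
    rw [hodd.neg_one_pow]
    push_cast
    ring
  have hF1 : F 1 = ((m - k : ℕ) : ℤ) * (Epoly m).coeff (m-1-(k-1)) * m := by
    rw [hF]
    simp only
    rw [show m-1-k+1 = m-k from by omega, Nat.choose_one_right,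
      (by omega : k - 1 = k - 1)]
    have : Even (k-1) := Nat.even_iff.mpr (by omega)
    rw [this.neg_one_pow]
    push_cast
    ring
  have hF2 : F 2 = - (((m-k+1).choose 2 : ℕ) : ℤ) * (Epoly m).coeff (m-1-(k-2)) * (m:ℤ)^2 := by
    rw [hF]
    simp only
    rw [show m-1-k+2 = m-k+1 from by omega]
    have : Odd (k-2) := Nat.odd_iff.mpr (by omega)
    rw [this.neg_one_pow]
    push_cast
    ring
  refine ⟨∑ i ∈ Finset.range (k-2),
    (-1:ℤ)^(k-(3+i)) * (((m-1-k+(3+i)).choose (3+i) : ℕ) : ℤ)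
      * (Epoly m).coeff (m-1-(k-(3+i))) * (m:ℤ)^i, ?_⟩
  have htail : ∑ i ∈ Finset.range (k-2), F (3+i)
      = (m:ℤ)^3 * ∑ i ∈ Finset.range (k-2),
        (-1:ℤ)^(k-(3+i)) * (((m-1-k+(3+i)).choose (3+i) : ℕ) : ℤ)
          * (Epoly m).coeff (m-1-(k-(3+i))) * (m:ℤ)^i := by
    rw [Finset.mul_sum]
    apply Finset.sum_congr rfl
    intro i _
    rw [hF]
    simp only
    rw [pow_add]
    ring
  rw [htail, hF0, hF1, hF2] at h
  linarith [h]

lemma stirling_Epoly (m j : ℕ) (hj1 : 1 ≤ j) (hj2 : j ≤ m - 1) :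
    ((stirling1 m (m - j) : ℕ) : ℤ) = (Epoly m).coeff (m-1-j) := by
  have hm : 1 ≤ m := by omega
  rw [stirling_coeff, asc_eq_X_mul_E m hm,
    show m - j = (m-1-j) + 1 from by omega, coeff_X_mul]

lemma val_eq_of (S T : ℕ) (h1 : 3^T ∣ S) (h2 : ¬ 3^(T+1) ∣ S) :
    S ≠ 0 ∧ padicValNat 3 S = T := by
  haveI : Fact (Nat.Prime 3) := ⟨by norm_num⟩
  have hS : S ≠ 0 := by rintro rfl; exact h2 (dvd_zero _)
  refine ⟨hS, ?_⟩
  have hle := (padicValNat_dvd_iff_le hS).mp h1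
  have hlt : ¬ (T + 1 ≤ padicValNat 3 S) := fun hcon =>
    h2 ((padicValNat_dvd_iff_le hS).mpr hcon)
  omega

lemma val_decomp (S : ℕ) (hS : S ≠ 0) :
    3 ^ (padicValNat 3 S) ∣ S ∧ ¬ 3 ^ (padicValNat 3 S + 1) ∣ S := by
  haveI : Fact (Nat.Prime 3) := ⟨by norm_num⟩
  exact ⟨pow_padicValNat_dvd, pow_succ_padicValNat_not_dvd hS⟩

lemma int_of_nat_dvd {t S : ℕ} (h : (3:ℤ)^t ∣ (S:ℤ)) : 3^t ∣ S := by
  have h2 : ((3^t : ℕ) : ℤ) ∣ (S:ℤ) := by push_cast; exact h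
  exact_mod_cast h2

lemma nat_to_int_dvd {t S : ℕ} (h : 3^t ∣ S) : (3:ℤ)^t ∣ (S:ℤ) := by
  have h2 : ((3^t : ℕ) : ℤ) ∣ (S:ℤ) := Int.natCast_dvd_natCast.mpr h
  push_cast at h2
  exact h2

lemma vm (a ν : ℕ) (ha : a = 1 ∨ a = 2) : padicValNat 3 (a * 3 ^ ν) = ν := by
  haveI : Fact (Nat.Prime 3) := ⟨by norm_num⟩
  have h3 : (1:ℕ) ≤ 3 ^ ν := Nat.one_le_pow _ _ (by norm_num)
  have e3 : padicValNat 3 (a * 3 ^ ν) = padicValNat 3 a + padicValNat 3 (3 ^ ν) :=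
    padicValNat.mul (by rcases ha with h|h <;> omega) (by omega)
  have e4 : padicValNat 3 (3 ^ ν) = ν := padicValNat.prime_pow (p := 3) ν
  have e5 : padicValNat 3 a = 0 :=
    padicValNat.eq_zero_of_not_dvd (by rcases ha with h|h <;> subst h <;> norm_num)
  omega

lemma vmk (a ν k : ℕ) (ha : a = 1 ∨ a = 2) (hk2 : 2 ≤ k)
    (hk' : k < a * 3 ^ ν) :
    padicValNat 3 (a * 3 ^ ν - k) = padicValNat 3 k ∧ padicValNat 3 k ≤ ν := by
  haveI : Fact (Nat.Prime 3) := ⟨by norm_num⟩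
  set m := a * 3 ^ ν with hm
  have hk0 : k ≠ 0 := by omega
  set w := padicValNat 3 k with hwdef
  obtain ⟨hdk, hndk⟩ := val_decomp k hk0
  by_cases hcase : w + 1 ≤ ν
  · -- w < ν
    have hdm : (3:ℕ)^w ∣ m :=
      dvd_trans (pow_dvd_pow 3 (show w ≤ ν by omega)) ⟨a, by rw [hm]; ring⟩
    have hdm1 : (3:ℕ)^(w+1) ∣ m := (pow_dvd_pow 3 hcase).trans ⟨a, by rw [hm]; ring⟩
    have h1 : 3^w ∣ m - k := Nat.dvd_sub hdm hdk
    have h2 : ¬ 3^(w+1) ∣ m - k := by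
      intro hcon
      have : (3:ℕ)^(w+1) ∣ k := by
        have := Nat.dvd_sub hdm1 hcon
        rwa [Nat.sub_sub_self (le_of_lt hk')] at this
      exact hndk this
    exact ⟨(val_eq_of _ _ h1 h2).2, by omega⟩
  · have hdvd : (3:ℕ)^ν ∣ k :=
      dvd_trans (pow_dvd_pow 3 (show ν ≤ w by omega)) hdk
    have h3 : (1:ℕ) ≤ 3 ^ ν := Nat.one_le_pow _ _ (by norm_num)
    rcases ha with h|h
    · exfalso
      have hle := Nat.le_of_dvd (by omega) hdvd
      rw [hm, h] at hk'
      omega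
    · subst h
      obtain ⟨t, ht⟩ := hdvd
      have hmm : m = 2 * 3 ^ ν := hm
      have ht1 : t = 1 := by
        rcases t with _ | t'
        · rw [mul_zero] at ht; omega
        · rcases t' with _ | t''
          · rfl
          · exfalso
            have h2 : 3 ^ ν * 2 ≤ 3 ^ ν * (t'' + 1 + 1) :=
              Nat.mul_le_mul_left _ (by omega)
            omega
      have hkeq : k = 3 ^ ν := by rw [ht1, mul_one] at ht; exact ht
      have hmk : m - k = 3 ^ ν := by omega
      have hv1 : padicValNat 3 (m - k) = ν := by
        rw [hmk]; exact padicValNat.prime_pow (p := 3) ν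
      have hv2 : padicValNat 3 k = ν := by
        rw [hkeq]; exact padicValNat.prime_pow (p := 3) ν
      rw [hv1]
      omega

lemma even_final (a ν k : ℕ) (ha : a = 1 ∨ a = 2) (hν : 1 ≤ ν) (hk2 : 2 ≤ k)
    (hkle : k ≤ 2 * a * 3 ^ (ν - 1) + 1) (hkeven : 2 ∣ k) :
    stirling1 (a * 3 ^ ν) (a * 3 ^ ν - k) ≠ 0 ∧
    padicValNat 3 (stirling1 (a * 3 ^ ν) (a * 3 ^ ν - k))
      = ν - 1 - padicValNat 3 k ∧
    padicValNat 3 k ≤ ν - 1 := by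
  haveI : Fact (Nat.Prime 3) := ⟨by norm_num⟩
  obtain ⟨r, rfl⟩ : ∃ r, ν = r + 1 := ⟨ν - 1, by omega⟩
  obtain ⟨j, rfl⟩ := hkeven
  simp only [Nat.add_sub_cancel] at hkle
  have hrearr : 2 * a * 3 ^ r = 2 * (a * 3 ^ r) := by ring
  have hj1 : 1 ≤ j := by omega
  have hj2 : j ≤ a * 3 ^ r := by omega
  set M := a * 3 ^ r with hM
  set Cj := M.choose j with hCj
  have hCpos : 0 < Cj := Nat.choose_pos hj2
  have hvC : padicValNat 3 Cj + padicValNat 3 j = r := choose_val a r j ha hj1 hj2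
  have hvj : padicValNat 3 (2 * j) = padicValNat 3 j := by
    rw [padicValNat.mul (by norm_num) (by omega)]
    have : padicValNat 3 2 = 0 := padicValNat.eq_zero_of_not_dvd (by norm_num)
    omega
  set w := padicValNat 3 Cj with hw
  obtain ⟨hd1, hd2⟩ := val_decomp Cj (by omega)
  rw [← hw] at hd1 hd2
  have hcong := even_cong a r j hj1 hj2
  set S := stirling1 (a * 3 ^ (r+1)) (a * 3 ^ (r+1) - 2 * j) with hS
  -- 3^w divides S
  have hdS : (3:ℤ)^w ∣ (S:ℤ) := by
    have h1 : (3:ℤ)^w ∣ (-1:ℤ)^j * (Cj:ℤ) := Dvd.dvd.mul_left (nat_to_int_dvd hd1) _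
    have h2 : (3:ℤ)^w ∣ ((S:ℤ) - (-1:ℤ)^j * (Cj:ℤ)) :=
      (pow_dvd_pow (3:ℤ) (by omega)).trans hcong
    have := dvd_add h2 h1
    simpa using this
  have hndS : ¬ (3:ℤ)^(w+1) ∣ (S:ℤ) := by
    intro hcon
    have h2 : (3:ℤ)^(w+1) ∣ ((S:ℤ) - ((S:ℤ) - (-1:ℤ)^j * (Cj:ℤ))) := by
      apply dvd_sub hcon ((pow_dvd_pow (3:ℤ) (by omega)).trans hcong)
    simp only [sub_sub_cancel] at h2
    have h3 : (3:ℤ)^(w+1) ∣ (Cj:ℤ) := by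
      have := h2.mul_left ((-1:ℤ)^j)
      have heq : (-1:ℤ)^j * ((-1:ℤ)^j * (Cj:ℤ)) = (Cj:ℤ) := by
        rw [← mul_assoc, ← pow_add, ← two_mul, pow_mul, neg_one_sq, one_pow, one_mul]
      rwa [heq] at this
    exact hd2 (int_of_nat_dvd h3)
  obtain ⟨hS0, hSval⟩ := val_eq_of S w (int_of_nat_dvd hdS)
    (fun hc => hndS (nat_to_int_dvd hc))
  refine ⟨hS0, ?_, by omega⟩
  rw [hSval, hvj]
  omega

lemma odd_final (a ν k : ℕ) (ha : a = 1 ∨ a = 2) (hν : 1 ≤ ν) (hk2 : 2 ≤ k)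
    (hkle : k ≤ 2 * a * 3 ^ (ν - 1) + 1) (hk' : k < a * 3 ^ ν) (hkodd : ¬ 2 ∣ k) :
    stirling1 (a * 3 ^ ν) (a * 3 ^ ν - k) ≠ 0 ∧
    padicValNat 3 (stirling1 (a * 3 ^ ν) (a * 3 ^ ν - k))
      = 2 * ν - 1 + padicValNat 3 k - padicValNat 3 (k - 1) ∧
    padicValNat 3 (k - 1) ≤ ν - 1 ∧ padicValNat 3 k ≤ ν := by
  haveI : Fact (Nat.Prime 3) := ⟨by norm_num⟩
  have h3ν : (1:ℕ) ≤ 3 ^ ν := Nat.one_le_pow _ _ (by norm_num)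
  have h3r : (1:ℕ) ≤ 3 ^ (ν-1) := Nat.one_le_pow _ _ (by norm_num)
  set m := a * 3 ^ ν with hm
  have hm1 : 1 ≤ m := by rcases ha with h|h <;> rw [hm, h] <;> omega
  have hk3 : 3 ≤ k := by omega
  -- even data for k - 1
  have hev := even_final a ν (k-1) ha hν (by omega) (by omega) (by omega)
  set Se := stirling1 m (m - (k-1)) with hSe
  obtain ⟨hSe0, hSeval, hvk1⟩ := hev
  -- valuation of m - k and k
  obtain ⟨hvmk, hvk⟩ := vmk a ν k ha hk2 hk'
  set vk := padicValNat 3 k with hvkdef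
  set vk1 := padicValNat 3 (k-1) with hvk1def
  -- the identity
  obtain ⟨w, hw⟩ := odd_identity m k hm1 hk3 (by omega) hkodd
  rw [← stirling_Epoly m k (by omega) (by omega),
      ← stirling_Epoly m (k-1) (by omega) (by omega),
      ← stirling_Epoly m (k-2) (by omega) (by omega)] at hw
  set S := stirling1 m (m - k) with hSdef
  set S2 := stirling1 m (m - (k-2)) with hS2def
  set T := vk + (ν - 1 - vk1) + ν with hT
  -- t1 exact valuation
  have hmk0 : m - k ≠ 0 := by omega
  have ht1val : padicValNat 3 ((m - k) * Se * m) = T := by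
    have e1 : padicValNat 3 ((m-k) * Se) = padicValNat 3 (m-k) + padicValNat 3 Se :=
      padicValNat.mul hmk0 hSe0
    have e2 : padicValNat 3 (((m-k) * Se) * m)
        = padicValNat 3 ((m-k) * Se) + padicValNat 3 m :=
      padicValNat.mul (Nat.mul_ne_zero hmk0 hSe0) (by omega)
    rw [e2, e1, hvmk, hSeval, vm a ν ha]
  have ht10 : (m - k) * Se * m ≠ 0 :=
    Nat.mul_ne_zero (Nat.mul_ne_zero hmk0 hSe0) (by omega)
  obtain ⟨ht1d, ht1nd⟩ := val_decomp _ ht10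
  rw [ht1val] at ht1d ht1nd
  -- t2 divisibility
  have hc1 : (3:ℕ)^vk ∣ (m - k + 1).choose 2 := by
    set n' := m - k with hn'
    have heven : 2 ∣ (n' + 1) * n' := by
      obtain ⟨r, hr⟩ := Nat.even_mul_succ_self n'
      exact ⟨r, by rw [mul_comm]; omega⟩
    have h2C : 2 * ((n' + 1).choose 2) = (n' + 1) * n' := by
      rw [Nat.choose_two_right, Nat.add_sub_cancel, Nat.mul_div_cancel' heven]
    have hdn : (3:ℕ)^vk ∣ n' := by
      obtain ⟨hd, _⟩ := val_decomp n' (by omega)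
      rwa [hvmk] at hd
    have hd2C : (3:ℕ)^vk ∣ 2 * ((n' + 1).choose 2) := by
      rw [h2C]; exact hdn.mul_left _
    exact (Nat.Coprime.dvd_of_dvd_mul_left
      (Nat.Coprime.pow_left _ (by norm_num)) hd2C)
  have hc2 : (3:ℕ)^ν ∣ S2 := by
    obtain ⟨r, hr⟩ : ∃ r, ν = r + 1 := ⟨ν - 1, by omega⟩
    have := odd_dvd a r (k-2) (by omega) (by rw [← hr]; omega)
    rw [← hr] at this
    exact int_of_nat_dvd (by rw [hS2def, hm]; exact_mod_cast this)
  have hc3 : (3:ℕ)^(2*ν) ∣ m^2 := by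
    rw [hm, mul_pow, ← pow_mul, show (3:ℕ)^(ν*2) = 3^(2*ν) from by ring_nf]
    exact Dvd.dvd.mul_left dvd_rfl _
  have ht2 : (3:ℕ)^(T+1) ∣ (m - k + 1).choose 2 * S2 * m^2 := by
    have hcomb : (3:ℕ)^(vk + ν + 2*ν) ∣ (m - k + 1).choose 2 * S2 * m^2 := by
      rw [pow_add, pow_add]
      exact mul_dvd_mul (mul_dvd_mul hc1 hc2) hc3
    exact (pow_dvd_pow 3 (by omega)).trans hcomb
  -- tail divisibility
  have htail : (3:ℤ)^(T+1) ∣ (m:ℤ)^3 * w := by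
    have h1 : (3:ℤ)^(T+1) ∣ (m:ℤ)^3 := by
      have : (m:ℤ)^3 = (a:ℤ)^3 * (3:ℤ)^(3*ν) := by
        rw [hm]; push_cast; rw [mul_pow, ← pow_mul]; ring_nf
      rw [this]
      exact Dvd.dvd.mul_left (pow_dvd_pow 3 (by omega)) _
    exact h1.mul_right _
  -- combine over ℤ
  have hwZ : 2 * (S:ℤ) = (((m-k) * Se * m : ℕ) : ℤ)
      - (((m - k + 1).choose 2 * S2 * m^2 : ℕ) : ℤ) + (m:ℤ)^3 * w := by
    rw [hw]; push_cast; ring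
  have hdvd2S : (3:ℤ)^T ∣ 2 * (S:ℤ) := by
    rw [hwZ]
    refine dvd_add (dvd_sub (nat_to_int_dvd ht1d) ?_) ?_
    · exact (pow_dvd_pow (3:ℤ) (by omega)).trans (nat_to_int_dvd ht2)
    · exact (pow_dvd_pow (3:ℤ) (by omega)).trans htail
  have hndvd2S : ¬ (3:ℤ)^(T+1) ∣ 2 * (S:ℤ) := by
    intro hcon
    have : (3:ℤ)^(T+1) ∣ (((m-k) * Se * m : ℕ) : ℤ) := by
      have heq : (((m-k) * Se * m : ℕ) : ℤ)
          = 2 * (S:ℤ) + (((m - k + 1).choose 2 * S2 * m^2 : ℕ) : ℤ) - (m:ℤ)^3 * w := by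
        rw [hwZ]; ring
      rw [heq]
      exact dvd_sub (dvd_add hcon (nat_to_int_dvd ht2)) htail
    exact ht1nd (int_of_nat_dvd this)
  -- back to ℕ
  have hdnat : (3:ℕ)^T ∣ 2 * S :=
    int_of_nat_dvd (t := T) (S := 2 * S) (by push_cast; exact hdvd2S)
  have hndnat : ¬ (3:ℕ)^(T+1) ∣ 2 * S := by
    intro hcon
    apply hndvd2S
    have h2 := nat_to_int_dvd (S := 2 * S) hcon
    push_cast at h2
    exact h2
  have hdS : (3:ℕ)^T ∣ S :=
    Nat.Coprime.dvd_of_dvd_mul_left (Nat.Coprime.pow_left _ (by norm_num)) hdnat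
  have hndS : ¬ (3:ℕ)^(T+1) ∣ S := fun hc => hndnat (hc.mul_left 2)
  obtain ⟨hS0, hSval⟩ := val_eq_of S T hdS hndS
  refine ⟨hS0, ?_, hvk1, hvk⟩
  rw [hSval]
  omega

end Stirling3

/-- Corollary 1: for `a ∈ {1,2}`, `n ≥ 1`, `2 ≤ k ≤ 2a·3^{n-1}+1`, `k < a·3^n`,
`v₃(s(a·3^n, a·3^n − k)) = n − 1 − v₃(k)` if `k` is even, and
`v₃(s(a·3^n, a·3^n − k)) = 2n − 1 + v₃(k) − v₃(k−1)` if `k` is odd. -/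
theorem stmt1 (a n k : ℕ) (ha : a = 1 ∨ a = 2) (hn : 1 ≤ n)
    (hk2 : 2 ≤ k) (hk : k ≤ 2 * a * 3 ^ (n - 1) + 1) (hk' : k < a * 3 ^ n) :
    (Even k →
      (padicValNat 3 (stirling1 (a * 3 ^ n) (a * 3 ^ n - k)) : ℤ)
        = (n : ℤ) - 1 - padicValNat 3 k) ∧
    (Odd k →
      (padicValNat 3 (stirling1 (a * 3 ^ n) (a * 3 ^ n - k)) : ℤ)
        = 2 * (n : ℤ) - 1 + padicValNat 3 k - padicValNat 3 (k - 1)) := by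
  constructor
  · intro hke
    obtain ⟨r, hr⟩ := hke
    have h2k : 2 ∣ k := ⟨r, by omega⟩
    obtain ⟨_, hval, hle⟩ := Stirling3.even_final a n k ha hn hk2 hk h2k
    rw [hval]
    omega
  · intro hko
    obtain ⟨r, hr⟩ := hko
    have h2k : ¬ 2 ∣ k := by omega
    obtain ⟨_, hval, hle1, hle2⟩ := Stirling3.odd_final a n k ha hn hk2 hk hk' h2k
    rw [hval]
    omega
end

section
/- Let n and k be positive integers with n + k odd. Then s(n, k) = (1/2) · ∑_{i=k+1}^{n} (−1)^{n−i} · s(n, i) · C(i−1, i−k) · n^{i−k}, where C(a,b) is the binomial coefficient. -/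
open Polynomial Finset

lemma asc_shift (m : ℕ) :
    (X + 1) * (ascPochhammer ℚ m).comp (X + 1 + 1)
      = (ascPochhammer ℚ m).comp (X + 1) * (X + 1 + (m : ℚ[X])) := by
  have h1 := congrArg (fun p => p.comp (X + 1)) (ascPochhammer_succ_left (S := ℚ) m)
  have h2 := congrArg (fun p => p.comp (X + 1)) (ascPochhammer_succ_right (S := ℚ) m)
  simp only [mul_comp, X_comp, add_comp, one_comp, natCast_comp, comp_assoc] at h1 h2
  rw [h1] at h2
  simpa using h2

lemma asc_reflect (m : ℕ) :
    (ascPochhammer ℚ m).comp (-X - (m : ℚ[X]))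
      = (-1) ^ m * (ascPochhammer ℚ m).comp (X + 1) := by
  induction m with
  | zero => simp
  | succ m ih =>
    have key := congrArg (fun p => p.comp (X + 1)) ih
    simp only [mul_comp, pow_comp, neg_comp, one_comp, comp_assoc, sub_comp, X_comp,
      natCast_comp, add_comp] at key
    -- key : Pm.comp (-(X+1) - m) = (-1)^m * Pm.comp (X + 1 + 1)
    rw [ascPochhammer_succ_right]
    simp only [mul_comp, add_comp, X_comp, natCast_comp]
    have e1 : -X - (((m + 1 : ℕ) : ℚ[X])) = -(X + 1) - (m : ℚ[X]) := by
      push_cast; ring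
    rw [e1, key]
    have e2 : (-(X + 1) - (m : ℚ[X]) + (m : ℚ[X])) = -(X + 1) := by ring
    rw [e2]
    calc (-1) ^ m * (ascPochhammer ℚ m).comp (X + 1 + 1) * -(X + 1)
        = (-1) ^ (m + 1) * ((X + 1) * (ascPochhammer ℚ m).comp (X + 1 + 1)) := by ring
      _ = (-1) ^ (m + 1) * ((ascPochhammer ℚ m).comp (X + 1) * (X + 1 + (m : ℚ[X]))) := by
          rw [asc_shift]
      _ = (-1) ^ (m + 1) * ((ascPochhammer ℚ m).comp (X + 1) * (X + 1 + ((m : ℕ) : ℚ[X]))) := by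
          norm_cast

lemma stirling1_eq_zero_of_lt {n k : ℕ} (h : n < k) : stirling1 n k = 0 := by
  unfold stirling1
  apply coeff_eq_zero_of_natDegree_lt
  rwa [ascPochhammer_natDegree]

/-- Lemma 2.1: if `n + k` is odd then
`s(n,k) = (1/2) ∑_{i=k+1}^{n} (−1)^{n−i} s(n,i) C(i−1, i−k) n^{i−k}`. -/
theorem stmt6 (n k : ℕ) (hn : 1 ≤ n) (hk : 1 ≤ k) (hodd : Odd (n + k)) :
    (stirling1 n k : ℚ)
      = (1 / 2) * ∑ i ∈ Finset.Icc (k + 1) n,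
          (-1 : ℚ) ^ (n - i) * stirling1 n i * (i - 1).choose (i - k) * (n : ℚ) ^ (i - k) := by
  rcases lt_or_ge n k with hnk | hkn
  · rw [stirling1_eq_zero_of_lt hnk, Finset.Icc_eq_empty (by omega)]
    simp
  have hne : k ≠ n := by rintro rfl; obtain ⟨t, ht⟩ := hodd; omega
  have hkn' : k < n := lt_of_le_of_ne hkn hne
  set m := n - 1 with hm'
  have hm : n = m + 1 := by omega
  set Q : ℚ[X] := (ascPochhammer ℚ m).comp (X + 1) with hQdef
  have hXQ : X * Q = ascPochhammer ℚ n := by rw [hm]; exact (ascPochhammer_succ_left (S := ℚ) m).symm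
  have hcoeff : ∀ j, Q.coeff j = (stirling1 n (j + 1) : ℚ) := by
    intro j
    rw [← coeff_X_mul, hXQ]
    unfold stirling1
    rw [← ascPochhammer_map (Nat.castRingHom ℚ) n, coeff_map]
    simp
  have hsz : ∀ j, n ≤ j → stirling1 n (j + 1) = 0 := fun j hj =>
    stirling1_eq_zero_of_lt (by omega)
  have hQsum : Q = ∑ j ∈ range n, C ((stirling1 n (j + 1) : ℚ)) * X ^ j := by
    ext j
    rw [finset_sum_coeff, hcoeff]
    simp only [coeff_C_mul, coeff_X_pow, mul_ite, mul_one, mul_zero]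
    rw [Finset.sum_ite_eq (range n) j]
    by_cases hj : j < n
    · simp [hj]
    · simp [hj, hsz j (by omega)]
  have hQrefl : Q.comp (-X - (n : ℚ[X])) = (-1) ^ m * Q := by
    have h := asc_reflect m
    calc Q.comp (-X - (n : ℚ[X]))
        = (ascPochhammer ℚ m).comp ((X + 1).comp (-X - (n : ℚ[X]))) := by
          rw [hQdef, comp_assoc]
      _ = (ascPochhammer ℚ m).comp (-X - (m : ℚ[X])) := by
          congr 1
          rw [hm]
          simp only [add_comp, X_comp, one_comp]
          push_cast
          ring
      _ = (-1) ^ m * Q := h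
  have hkey : ((∑ j ∈ range n, C ((stirling1 n (j + 1) : ℚ)) * X ^ j).comp
        (-X - (n : ℚ[X]))).coeff (k - 1) = ((-1) ^ m * Q).coeff (k - 1) := by
    rw [← hQsum, hQrefl]
  rw [Polynomial.sum_comp, finset_sum_coeff] at hkey
  have hC1 : ∀ j : ℕ, ((-1 : ℚ[X]) ^ j) = C ((-1 : ℚ) ^ j) := by intro j; simp
  have hL : ∀ j ∈ range n,
      ((C ((stirling1 n (j + 1) : ℚ)) * X ^ j).comp (-X - (n : ℚ[X]))).coeff (k - 1)
        = (stirling1 n (j + 1) : ℚ) * ((-1) ^ j *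
            ((n : ℚ) ^ (j - (k - 1)) * (j.choose (k - 1)))) := by
    intro j hj
    rw [mul_comp, C_comp, pow_comp, X_comp, coeff_C_mul]
    congr 1
    have e : (-X - (n : ℚ[X])) = -(X + C (n : ℚ)) := by rw [C_eq_natCast]; ring
    rw [e, neg_pow, hC1, coeff_C_mul, coeff_X_add_C_pow]
  rw [Finset.sum_congr rfl hL] at hkey
  rw [show ((-1 : ℚ[X]) ^ m * Q).coeff (k - 1) = (-1 : ℚ) ^ m * (stirling1 n k : ℚ) by
    rw [hC1, coeff_C_mul, hcoeff, show k - 1 + 1 = k by omega]] at hkey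
  -- hkey : ∑ j ∈ range n, a_j * ((-1)^j * (n^(j-(k-1)) * C(j,k-1))) = (-1)^m * s(n,k)
  set F : ℕ → ℚ := fun i =>
    (-1 : ℚ) ^ (n - i) * stirling1 n i * (i - 1).choose (k - 1) * (n : ℚ) ^ (i - k) with hF
  have hstep1 : ∑ i ∈ Finset.Icc 1 n, F i = (stirling1 n k : ℚ) := by
    rw [← Finset.Ico_add_one_right_eq_Icc, Finset.sum_Ico_eq_sum_range]
    have : ∀ j ∈ range (n + 1 - 1), F (1 + j)
        = (-1 : ℚ) ^ m * ((stirling1 n (j + 1) : ℚ) * ((-1) ^ j *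
            ((n : ℚ) ^ (j - (k - 1)) * (j.choose (k - 1))))) := by
      intro j hj
      simp only [Finset.mem_range] at hj
      have hjn : j < n := by omega
      have hsign : (-1 : ℚ) ^ (n - (1 + j)) * (-1 : ℚ) ^ j = (-1 : ℚ) ^ m := by
        rw [← pow_add]; congr 1; omega
      have hexp : j + 1 - k = j - (k - 1) := by omega
      have hidx : 1 + j = j + 1 := by omega
      rw [hF]
      simp only [hidx, hexp, Nat.add_sub_cancel]
      calc (-1 : ℚ) ^ (n - (j + 1)) * (stirling1 n (j + 1) : ℚ) * (j.choose (k - 1) : ℚ)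
              * (n : ℚ) ^ (j - (k - 1))
          = ((-1 : ℚ) ^ (n - (1 + j)) * (-1 : ℚ) ^ j) * ((stirling1 n (j + 1) : ℚ) * ((-1) ^ j *
            ((n : ℚ) ^ (j - (k - 1)) * (j.choose (k - 1))))) := by
            rw [show n - (1 + j) = n - (j + 1) by omega]
            have hsq : (-1 : ℚ) ^ j * (-1 : ℚ) ^ j = 1 := by
              rw [← pow_add, Even.neg_one_pow ⟨j, by ring⟩]
            linear_combination -((-1 : ℚ)) ^ (n - (j + 1)) * (stirling1 n (j + 1) : ℚ)
              * (j.choose (k - 1) : ℚ) * (n : ℚ) ^ (j - (k - 1)) * hsq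
        _ = (-1 : ℚ) ^ m * ((stirling1 n (j + 1) : ℚ) * ((-1) ^ j *
            ((n : ℚ) ^ (j - (k - 1)) * (j.choose (k - 1))))) := by rw [hsign]
    rw [Finset.sum_congr rfl this, ← Finset.mul_sum, show n + 1 - 1 = n from rfl, hkey]
    rw [← mul_assoc, ← pow_add, Even.neg_one_pow ⟨m, by ring⟩, one_mul]
  have hsplit : ∑ i ∈ Finset.Icc 1 k, F i + ∑ i ∈ Finset.Icc (k + 1) n, F i
      = ∑ i ∈ Finset.Icc 1 n, F i := by
    have e : ∀ a b : ℕ, Finset.Icc (a + 1) b = Finset.Ioc a b := by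
      intro a b; ext x; simp only [Finset.mem_Icc, Finset.mem_Ioc]; omega
    rw [show Finset.Icc 1 k = Finset.Ioc 0 k from e 0 k,
      show Finset.Icc 1 n = Finset.Ioc 0 n from e 0 n, e k n]
    exact Finset.sum_Ioc_consecutive _ (by omega) (by omega)
  have hlow : ∑ i ∈ Finset.Icc 1 k, F i = -(stirling1 n k : ℚ) := by
    rw [Finset.sum_eq_single k]
    · have hodd' : Odd (n - k) := by obtain ⟨t, ht⟩ := hodd; exact ⟨t - k, by omega⟩
      rw [hF]
      simp only [Nat.sub_self, pow_zero, Nat.choose_self, Nat.cast_one, mul_one]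
      rw [Odd.neg_one_pow hodd']
      ring
    · intro i hi hik
      simp only [Finset.mem_Icc] at hi
      rw [hF]
      simp only
      rw [Nat.choose_eq_zero_of_lt (by omega : i - 1 < k - 1)]
      simp
    · intro h
      exact absurd (Finset.mem_Icc.mpr ⟨hk, le_refl k⟩) h
  have hhigh : ∑ i ∈ Finset.Icc (k + 1) n, F i
      = ∑ i ∈ Finset.Icc (k + 1) n,
          (-1 : ℚ) ^ (n - i) * stirling1 n i * (i - 1).choose (i - k) * (n : ℚ) ^ (i - k) := by
    apply Finset.sum_congr rfl
    intro i hi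
    simp only [Finset.mem_Icc] at hi
    simp only [hF]
    have hc : (i - 1).choose (i - k) = (i - 1).choose (k - 1) := by
      rw [show i - k = (i - 1) - (k - 1) by omega]
      exact Nat.choose_symm (by omega)
    rw [hc]
  rw [hhigh] at hsplit
  rw [hstep1, hlow] at hsplit
  linarith [hsplit]
end

section
/- Let n be a positive integer and let m, k be nonnegative integers. Then s(m + n, k) = ∑_{i=0}^{k} s(m, i) · s_m(n, k − i). -/
/-- The `m`-th Stirling number of the first kind, defined by the identity
`(x+m)(x+m+1)⋯(x+m+n-1) = ∑ k, stirling1Shift m n k * x^k`. -/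
noncomputable def stirling1Shift (m n k : ℕ) : ℕ :=
  ((ascPochhammer ℕ n).comp (Polynomial.X + Polynomial.C m)).coeff k

/-- Lemma 2.4: `s(m+n, k) = ∑_{i=0}^{k} s(m,i) · s_m(n, k−i)`. -/
theorem stmt8 (n m k : ℕ) (hn : 1 ≤ n) :
    stirling1 (m + n) k
      = ∑ i ∈ Finset.range (k + 1), stirling1 m i * stirling1Shift m n (k - i) := by
  have h := ascPochhammer_mul (S := ℕ) m n
  simp only [stirling1, stirling1Shift, ← h, Polynomial.coeff_mul]
  rw [Finset.Nat.sum_antidiagonal_eq_sum_range_succ_mk]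
  simp [Polynomial.C_eq_natCast]
end

section
/- Let n be a positive integer and let m, k be nonnegative integers. Then s_m(n, k) = ∑_{i=k}^{n} s(n, i) · C(i, i − k) · m^{i−k}, where C(a,b) is the binomial coefficient. -/
open Polynomial Finset in
/-- Lemma 2.5: `s_m(n,k) = ∑_{i=k}^{n} s(n,i) · C(i, i−k) · m^{i−k}`. -/
theorem stmt9 (n m k : ℕ) (hn : 1 ≤ n) :
    stirling1Shift m n k
      = ∑ i ∈ Finset.Icc k n, stirling1 n i * i.choose (i - k) * m ^ (i - k) := by
  have hd : (ascPochhammer ℕ n).natDegree < n + 1 := by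
    rw [ascPochhammer_natDegree]; omega
  have h1 : stirling1Shift m n k
      = ∑ i ∈ range (n+1), (ascPochhammer ℕ n).coeff i * (m ^ (i-k) * i.choose k) := by
    unfold stirling1Shift
    conv_lhs => rw [(ascPochhammer ℕ n).as_sum_range' (n+1) hd]
    simp only [Polynomial.sum_comp, monomial_comp, finset_sum_coeff, coeff_C_mul,
      coeff_X_add_C_pow, Nat.cast_id]
  rw [h1]
  rw [← Finset.sum_subset (show Finset.Icc k n ⊆ Finset.range (n+1) by
        intro x hx; simp only [Finset.mem_Icc, Finset.mem_range] at hx ⊢; omega)]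
  · apply Finset.sum_congr rfl
    intro i hi
    simp only [Finset.mem_Icc] at hi
    rw [show i.choose k = i.choose (i - k) from (Nat.choose_symm hi.1).symm]
    unfold stirling1; ring
  · intro i hi hni
    simp only [Finset.mem_range, Finset.mem_Icc] at hi hni
    rw [Nat.choose_eq_zero_of_lt (by omega : i < k)]
    simp
end
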